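/- The bosonic entropy function g(x) = (x+1)·log₂(x+1) − x·log₂(x) is subadditive on the nonnegative reals: g(x+y) ≤ g(x) + g(y) for all x, y ≥ 0 (with the convention g(0) = 0). -/

import Mathlib

noncomputable def g (x : ℝ) : ℝ := (x + 1) * Real.logb 2 (x + 1) - x * Real.logb 2 x

/-!
Writing `L = logb 2` and `s = x + y`, one has the identity
`g x + g y - g s = x (Δ x - Δ s) + y (Δ y - Δ s) + (L (x + 1) + L (y + 1) - L (s + 1))`,
where `Δ t = L (t + 1) - L t = L (1 + 1/t)`. All three terms are nonnegative: `Δ` is antitone on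
`(0, ∞)` and `s + 1 ≤ (x + 1) (y + 1)`.
-/

namespace Real

variable {b : ℝ}

theorem logb_add_one_sub_logb_antitoneOn (hb : 1 < b) :
    AntitoneOn (fun t ↦ logb b (t + 1) - logb b t) (Set.Ioi 0) := by
  intro x (hx : 0 < x) y (hy : 0 < y) hxy
  have hdiv : ∀ t : ℝ, 0 < t → logb b (t + 1) - logb b t = logb b (1 + t⁻¹) := fun t ht ↦ by
    rw [← logb_div (by positivity) ht.ne', add_div, div_self ht.ne', one_div]
  simp only [hdiv x hx, hdiv y hy]
  gcongr

theorem logb_add_add_one_le (hb : 1 < b) {x y : ℝ} (hx : 0 ≤ x) (hy : 0 ≤ y) :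
    logb b (x + y + 1) ≤ logb b (x + 1) + logb b (y + 1) := by
  rw [← logb_mul (by positivity) (by positivity)]
  exact logb_le_logb_of_le hb (by positivity) (by nlinarith)

end Real

theorem g_zero : g 0 = 0 := by
  simp [g]

theorem g_subadditive : ∀ x y : ℝ, 0 ≤ x → 0 ≤ y → g (x + y) ≤ g x + g y := by
  intro x y hx hy
  rcases hx.eq_or_lt with rfl | hx
  · simp [g_zero]
  rcases hy.eq_or_lt with rfl | hy
  · simp [g_zero]
  have hs : 0 < x + y := add_pos hx hy
  have hΔx := Real.logb_add_one_sub_logb_antitoneOn one_lt_two hx hs (le_add_of_nonneg_right hy.le)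
  have hΔy := Real.logb_add_one_sub_logb_antitoneOn one_lt_two hy hs (le_add_of_nonneg_left hx.le)
  have hL := Real.logb_add_add_one_le one_lt_two hx.le hy.le
  simp only at hΔx hΔy
  unfold g
  linear_combination x * hΔx + y * hΔy + hL
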